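/- Let G(u,z,q) = Σ_{n≥0} q^{n²-n} u^n/((z;q)_n (q;q)_n) as a formal power series in u. Then G(qu,qz,q) - G(u,z,q) = -(u/((1-z)(1-qz))) G(q²u,q²z,q). -/

import Mathlib

/-- The q-Pochhammer symbol `(a;q)_n`. -/
noncomputable def qPoch (a q : ℝ) (n : ℕ) : ℝ := ∏ j ∈ Finset.range n, (1 - q ^ j * a)

/-!
Comparing coefficients of `u^(n+1)`, the identity reduces to a relation between single terms.
Writing `(a;q)_(n+1) = (1 - a) (qa;q)_n` and `(qa;q)_(n+1) = (qa;q)_n (1 - q^(n+1) a)`, the two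
terms on the left have the common factor `q^(n(n+1)) / ((1 - a) (qa;q)_(n+1) (q;q)_(n+1))`, times
`q^(n+1) (1 - a) - (1 - q^(n+1) a) = -(1 - q^(n+1))`; cancelling `1 - q^(n+1)` against
`(q;q)_(n+1)` and using `(qa;q)_(n+1) = (1 - qa) (q²a;q)_n` gives the term on the right.
-/

open PowerSeries

lemma qPoch_succ (a q : ℝ) (n : ℕ) : qPoch a q (n + 1) = qPoch a q n * (1 - q ^ n * a) :=
  Finset.prod_range_succ _ _

lemma qPoch_succ' (a q : ℝ) (n : ℕ) : qPoch a q (n + 1) = (1 - a) * qPoch (q * a) q n := by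
  rw [qPoch, Finset.prod_range_succ', pow_zero, one_mul, mul_comm, qPoch]
  congr 1
  exact Finset.prod_congr rfl fun j _ => by ring

lemma qPoch_ne_zero {a q : ℝ} (ha : ∀ j : ℕ, 1 - q ^ j * a ≠ 0) (n : ℕ) : qPoch a q n ≠ 0 :=
  Finset.prod_ne_zero_iff.2 fun j _ => ha j

lemma one_sub_pow_mul_pow_mul_ne_zero {a q : ℝ} (ha : ∀ j : ℕ, 1 - q ^ j * a ≠ 0) (k j : ℕ) :
    1 - q ^ j * (q ^ k * a) ≠ 0 := by
  simpa only [pow_add, mul_assoc] using ha (j + k)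

/-- The coefficient of `u^n` in `G(u, w, q)`. -/
noncomputable def gCoeff (q w : ℝ) (n : ℕ) : ℝ := q ^ (n * (n - 1)) / (qPoch w q n * qPoch q q n)

lemma sq_pow_mul_pow_mul_pred (q : ℝ) (n : ℕ) :
    (q ^ 2) ^ n * q ^ (n * (n - 1)) = q ^ ((n + 1) * n) := by
  rw [← pow_mul, ← pow_add]
  congr 1
  cases n with
  | zero => rfl
  | succ n => rw [Nat.add_sub_cancel]; ring

lemma pow_succ_mul_gCoeff_sub_gCoeff {a q : ℝ} (ha : ∀ j : ℕ, 1 - q ^ j * a ≠ 0)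
    (hq : ∀ j : ℕ, 1 - q ^ j * q ≠ 0) (n : ℕ) :
    q ^ (n + 1) * gCoeff q (q * a) (n + 1) - gCoeff q a (n + 1) =
      -(1 / ((1 - a) * (1 - q * a)) * ((q ^ 2) ^ n * gCoeff q (q ^ 2 * a) n)) := by
  have ha0 : 1 - a ≠ 0 := by simpa using ha 0
  have ha1 : 1 - q * a ≠ 0 := by simpa using ha 1
  have hqa : ∀ j : ℕ, 1 - q ^ j * (q * a) ≠ 0 := by
    simpa only [pow_one] using one_sub_pow_mul_pow_mul_ne_zero ha 1
  have hqn : 1 - q * q ^ n ≠ 0 := by rw [mul_comm]; exact hq n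
  have hqan : 1 - q * a * q ^ n ≠ 0 := by rw [mul_comm]; exact hqa n
  have hqq : qPoch q q n ≠ 0 := qPoch_ne_zero hq n
  have hqaq : qPoch (q * a) q n ≠ 0 := qPoch_ne_zero hqa n
  have hq2a : qPoch (q ^ 2 * a) q n = qPoch (q * a) q n * (1 - q ^ n * (q * a)) / (1 - q * a) := by
    rw [← qPoch_succ, qPoch_succ', ← mul_assoc, ← pow_two, mul_div_cancel_left₀ _ ha1]
  simp only [gCoeff, Nat.add_sub_cancel]
  rw [← mul_div_assoc, ← mul_div_assoc, ← sq_pow_mul_pow_mul_pred, qPoch_succ' a, qPoch_succ q q,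
    qPoch_succ (q * a), hq2a]
  field_simp
  ring

theorem rescale_mk_gCoeff_sub_mk_gCoeff {a q : ℝ} (ha : ∀ j : ℕ, 1 - q ^ j * a ≠ 0)
    (hq : ∀ j : ℕ, 1 - q ^ j * q ≠ 0) :
    rescale q (mk (gCoeff q (q * a))) - mk (gCoeff q a) =
      -(C (1 / ((1 - a) * (1 - q * a)))) * X * rescale (q ^ 2) (mk (gCoeff q (q ^ 2 * a))) := by
  ext n
  rw [neg_mul, neg_mul, map_sub, map_neg, mul_assoc, coeff_C_mul, coeff_rescale, coeff_mk, coeff_mk]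
  cases n with
  | zero => simp [coeff_zero_X_mul, gCoeff, qPoch]
  | succ n =>
    rw [coeff_succ_X_mul, coeff_rescale, coeff_mk]
    exact pow_succ_mul_gCoeff_sub_gCoeff ha hq n

theorem G_functional_equation (q z : ℝ) (hq0 : 0 < q) (hq1 : q < 1)
    (hz : ∀ j : ℕ, 1 - q ^ j * z ≠ 0)
    (G : ℝ → PowerSeries ℝ)
    (hG : ∀ w : ℝ, G w = PowerSeries.mk fun n => q ^ (n * (n - 1)) / (qPoch w q n * qPoch q q n)) :
    PowerSeries.rescale q (G (q * z)) - G z =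
      -(PowerSeries.C (1 / ((1 - z) * (1 - q * z)))) * PowerSeries.X *
        PowerSeries.rescale (q ^ 2) (G (q ^ 2 * z)) := by
  have hq : ∀ j : ℕ, 1 - q ^ j * q ≠ 0 := fun j => by
    rw [← pow_succ]
    exact (sub_pos.2 (pow_lt_one₀ hq0.le hq1 j.succ_ne_zero)).ne'
  simp only [hG]
  exact rescale_mk_gCoeff_sub_mk_gCoeff hz hq
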